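/- arXiv:2406.18868 — 3 statements merged into one kernel-verified Lean document; each statement's English description precedes it below -/
import Mathlib

section
/- Let λ > 0, let Φ₁ be a real s₁ × d matrix with label matrix Y₁ of size s₁ × c₁, and let Φ₂ be a real s₂ × d matrix. Set M₁ = (Φ₁ᵀΦ₁ + λ·I_d)⁻¹, W₁ = M₁Φ₁ᵀY₁ (the ridge solution on the first dataset), and M = (Φ₁ᵀΦ₁ + Φ₂ᵀΦ₂ + λ·I_d)⁻¹ (the updated memory matrix). Then M Φ₁ᵀ Y₁ = W₁ − M Φ₂ᵀ Φ₂ W₁; that is, the joint solution's block corresponding to the old labels can be computed from W₁, M, and Φ₂ alone, without access to the first dataset Φ₁, Y₁. -/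
open Matrix

lemma aux_posdef {d : ℕ} (lam : ℝ) (hlam : 0 < lam) {s : ℕ} (Φ : Matrix (Fin s) (Fin d) ℝ) :
    (Φᵀ * Φ + lam • (1 : Matrix (Fin d) (Fin d) ℝ)).PosDef := by
  have h1 : (Φᵀ * Φ).PosSemidef := by
    simpa using Matrix.posSemidef_conjTranspose_mul_self Φ
  have h2 : (lam • (1 : Matrix (Fin d) (Fin d) ℝ)).PosDef := by
    simpa [Matrix.smul_one_eq_diagonal] using
      Matrix.posDef_diagonal_iff.mpr (fun _ => hlam)
  exact Matrix.PosDef.posSemidef_add h1 h2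

/-- For `λ > 0`, with `M₁ = (Φ₁ᵀΦ₁ + λI_d)⁻¹`, `W₁ = M₁Φ₁ᵀY₁` and the updated memory
`M = (Φ₁ᵀΦ₁ + Φ₂ᵀΦ₂ + λI_d)⁻¹`, the old-label block of the joint ridge solution can be
computed without the first dataset: `MΦ₁ᵀY₁ = W₁ − MΦ₂ᵀΦ₂W₁`. -/
theorem joint_ridge_old_block_from_previous_solution
    (lam : ℝ) (hlam : 0 < lam) (s₁ s₂ d c₁ : ℕ)
    (Φ₁ : Matrix (Fin s₁) (Fin d) ℝ) (Y₁ : Matrix (Fin s₁) (Fin c₁) ℝ)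
    (Φ₂ : Matrix (Fin s₂) (Fin d) ℝ)
    (M₁ : Matrix (Fin d) (Fin d) ℝ)
    (hM₁ : M₁ = (Φ₁ᵀ * Φ₁ + lam • (1 : Matrix (Fin d) (Fin d) ℝ))⁻¹)
    (W₁ : Matrix (Fin d) (Fin c₁) ℝ)
    (hW₁ : W₁ = M₁ * Φ₁ᵀ * Y₁)
    (M : Matrix (Fin d) (Fin d) ℝ)
    (hM : M = (Φ₁ᵀ * Φ₁ + Φ₂ᵀ * Φ₂ + lam • (1 : Matrix (Fin d) (Fin d) ℝ))⁻¹) :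
    M * Φ₁ᵀ * Y₁ = W₁ - M * Φ₂ᵀ * Φ₂ * W₁ := by
  set A₁ := Φ₁ᵀ * Φ₁ + lam • (1 : Matrix (Fin d) (Fin d) ℝ) with hA₁
  set A := Φ₁ᵀ * Φ₁ + Φ₂ᵀ * Φ₂ + lam • (1 : Matrix (Fin d) (Fin d) ℝ) with hA
  have h1 : A₁.PosDef := aux_posdef lam hlam Φ₁
  have h2 : A.PosDef := by
    have := Matrix.PosDef.posSemidef_add (by simpa using Matrix.posSemidef_conjTranspose_mul_self Φ₂) h1
    have e : Φ₂ᵀ * Φ₂ + A₁ = A := by rw [hA₁, hA]; abel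
    rwa [e] at this
  have hU1 : IsUnit A₁ := h1.isUnit
  have hU : IsUnit A := h2.isUnit
  have key : Φ₁ᵀ * Y₁ = A₁ * W₁ := by
    rw [hW₁, hM₁, ← Matrix.mul_assoc, ← Matrix.mul_assoc,
      Matrix.mul_nonsing_inv _ ((Matrix.isUnit_iff_isUnit_det _).mp hU1), Matrix.one_mul]
  have hMA : M * A = 1 := by
    rw [hM, Matrix.nonsing_inv_mul _ ((Matrix.isUnit_iff_isUnit_det _).mp hU)]
  have hAA : A = A₁ + Φ₂ᵀ * Φ₂ := by rw [hA₁, hA]; abel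
  calc M * Φ₁ᵀ * Y₁ = M * (A₁ * W₁) := by rw [Matrix.mul_assoc, key]
    _ = M * ((A - Φ₂ᵀ * Φ₂) * W₁) := by rw [hAA, add_sub_cancel_right]
    _ = W₁ - M * Φ₂ᵀ * Φ₂ * W₁ := by
        rw [Matrix.sub_mul, Matrix.mul_sub, ← Matrix.mul_assoc, hMA, Matrix.one_mul,
          Matrix.mul_assoc, Matrix.mul_assoc, Matrix.mul_assoc]
end

section
/- (Single-step version of Theorem 1.) Let λ > 0, let Φ₁ be a real s₁ × d matrix with label matrix Y₁ of size s₁ × c₁, and let Φ₂ be a real s₂ × d matrix with label matrix Y₂ of size s₂ × c₂. Set M₁ = (Φ₁ᵀΦ₁ + λ·I_d)⁻¹, W₁ = M₁Φ₁ᵀY₁, and M = M₁ − M₁Φ₂ᵀ(I_{s₂} + Φ₂M₁Φ₂ᵀ)⁻¹Φ₂M₁. Then the recursively updated parameter W = [W₁ − MΦ₂ᵀΦ₂W₁ | MΦ₂ᵀY₂] (horizontal concatenation) is the unique minimizer over W' ∈ ℝ^{d×(c₁+c₂)} of the joint ridge objective ‖Y − ΦW'‖_F² + λ‖W'‖_F²,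 where Φ is the vertical stack of Φ₁ on top of Φ₂ and Y is the block-diagonal matrix with blocks Y₁ and Y₂. -/
/-!
By the Woodbury identity, `M` is the inverse of the joint regularized Gram matrix
`ΦᵀΦ + λI = Φ₁ᵀΦ₁ + λI + Φ₂ᵀΦ₂`, and since `Φ₁ᵀY₁ = (Φ₁ᵀΦ₁ + λI) W₁` the recursive update is
exactly the batch solution `(ΦᵀΦ + λI)⁻¹ΦᵀY`. That solution satisfies the normal equation
`Φᵀ(Y − ΦW) = λW`, which kills the cross term in
`J(W + D) = J(W) + ‖ΦD‖_F² + λ‖D‖_F² − 2⟨D, Φᵀ(Y − ΦW) − λW⟩`, so every `D ≠ 0` strictly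
increases the objective.
-/

open Matrix

/-- The ridge regression objective `J(W) = ‖Y − Φ W‖_F² + λ‖W‖_F²`. -/
noncomputable def ridgeObj {s d c : Type} [Fintype s] [Fintype d] [Fintype c]
    (lam : ℝ) (Φ : Matrix s d ℝ) (Y : Matrix s c ℝ) (W : Matrix d c ℝ) : ℝ :=
  (∑ i, ∑ j, (Y - Φ * W) i j ^ 2) + lam * ∑ i, ∑ j, W i j ^ 2

section RidgeRegression

variable {s d c : Type} [Fintype s] [Fintype d] [Fintype c]

lemma sum_sq_eq_trace_transpose_mul_self (X : Matrix s c ℝ) :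
    ∑ i, ∑ j, X i j ^ 2 = trace (Xᵀ * X) := by
  rw [Finset.sum_comm]
  simp [trace, mul_apply, sq]

lemma sum_sq_pos_of_ne_zero {X : Matrix s c ℝ} (hX : X ≠ 0) : 0 < ∑ i, ∑ j, X i j ^ 2 := by
  refine lt_of_le_of_ne (by positivity) (Ne.symm ?_)
  rwa [sum_sq_eq_trace_transpose_mul_self, ← conjTranspose_eq_transpose_of_trivial, Ne,
    trace_conjTranspose_mul_self_eq_zero_iff]

lemma trace_transpose_mul_comm {m n : Type} [Fintype m] [Fintype n] (A B : Matrix m n ℝ) :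
    trace (Aᵀ * B) = trace (Bᵀ * A) := by
  rw [← trace_transpose, transpose_mul, transpose_transpose]

lemma ridgeObj_add (lam : ℝ) (Φ : Matrix s d ℝ) (Y : Matrix s c ℝ) (W D : Matrix d c ℝ) :
    ridgeObj lam Φ Y (W + D) = ridgeObj lam Φ Y W + ridgeObj lam Φ 0 D
      - 2 * trace (Dᵀ * (Φᵀ * (Y - Φ * W) - lam • W)) := by
  have hY : trace (Yᵀ * (Φ * D)) = trace (Dᵀ * (Φᵀ * Y)) := by
    rw [trace_transpose_mul_comm, transpose_mul, Matrix.mul_assoc]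
  have hΦ : trace (Wᵀ * (Φᵀ * (Φ * D))) = trace (Dᵀ * (Φᵀ * (Φ * W))) := by
    rw [← Matrix.mul_assoc Φᵀ, trace_transpose_mul_comm, transpose_mul, transpose_mul,
      transpose_transpose, Matrix.mul_assoc, Matrix.mul_assoc]
  simp only [ridgeObj, sum_sq_eq_trace_transpose_mul_self, zero_sub, transpose_neg,
    transpose_sub, transpose_add, transpose_mul, Matrix.neg_mul, Matrix.mul_neg, neg_neg,
    Matrix.sub_mul, Matrix.mul_sub, Matrix.add_mul, Matrix.mul_add, Matrix.mul_smul,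
    trace_sub, trace_add, trace_smul, smul_eq_mul, Matrix.mul_assoc]
  rw [hY, hΦ, trace_transpose_mul_comm W D]
  ring

lemma ridgeObj_zero_pos {lam : ℝ} (hlam : 0 < lam) (Φ : Matrix s d ℝ) {D : Matrix d c ℝ}
    (hD : D ≠ 0) : 0 < ridgeObj lam Φ 0 D := by
  have := sum_sq_pos_of_ne_zero hD
  unfold ridgeObj
  positivity

lemma ridgeObj_lt_of_normal_eq {lam : ℝ} (hlam : 0 < lam) {Φ : Matrix s d ℝ}
    {Y : Matrix s c ℝ} {W : Matrix d c ℝ} (hW : Φᵀ * (Y - Φ * W) = lam • W)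
    {W' : Matrix d c ℝ} (hW' : W' ≠ W) : ridgeObj lam Φ Y W < ridgeObj lam Φ Y W' := by
  have hpos := ridgeObj_zero_pos hlam Φ (sub_ne_zero.mpr hW')
  have := ridgeObj_add lam Φ Y W (W' - W)
  rw [add_sub_cancel, hW, sub_self, Matrix.mul_zero, trace_zero, mul_zero, sub_zero] at this
  linarith

end RidgeRegression

section RidgeSolution

variable {s d c : Type} [Fintype s] [Fintype d] [DecidableEq d]

noncomputable def ridgeSolution (lam : ℝ) (Φ : Matrix s d ℝ) (Y : Matrix s c ℝ) :
    Matrix d c ℝ :=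
  (Φᵀ * Φ + lam • (1 : Matrix d d ℝ))⁻¹ * Φᵀ * Y

lemma posDef_transpose_mul_self_add_smul_one {lam : ℝ} (hlam : 0 < lam) (Φ : Matrix s d ℝ) :
    (Φᵀ * Φ + lam • (1 : Matrix d d ℝ)).PosDef := by
  refine PosDef.posSemidef_add ?_ (PosDef.one.smul hlam)
  simpa only [conjTranspose_eq_transpose_of_trivial] using posSemidef_conjTranspose_mul_self Φ

lemma mul_ridgeSolution {lam : ℝ} (hlam : 0 < lam) (Φ : Matrix s d ℝ) (Y : Matrix s c ℝ) :
    (Φᵀ * Φ + lam • (1 : Matrix d d ℝ)) * ridgeSolution lam Φ Y = Φᵀ * Y := by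
  rw [ridgeSolution, Matrix.mul_assoc, mul_nonsing_inv_cancel_left _ _
    (posDef_transpose_mul_self_add_smul_one hlam Φ).det_pos.ne'.isUnit]

lemma ridgeSolution_normal_eq {lam : ℝ} (hlam : 0 < lam) (Φ : Matrix s d ℝ) (Y : Matrix s c ℝ) :
    Φᵀ * (Y - Φ * ridgeSolution lam Φ Y) = lam • ridgeSolution lam Φ Y := by
  rw [Matrix.mul_sub, ← mul_ridgeSolution hlam Φ Y, Matrix.add_mul, Matrix.smul_mul,
    Matrix.one_mul, Matrix.mul_assoc]
  abel

lemma ridgeObj_ridgeSolution_lt [Fintype c] {lam : ℝ} (hlam : 0 < lam) (Φ : Matrix s d ℝ)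
    (Y : Matrix s c ℝ) {W : Matrix d c ℝ} (hW : W ≠ ridgeSolution lam Φ Y) :
    ridgeObj lam Φ Y (ridgeSolution lam Φ Y) < ridgeObj lam Φ Y W :=
  ridgeObj_lt_of_normal_eq hlam (ridgeSolution_normal_eq hlam Φ Y) hW

lemma ridgeObj_ridgeSolution_le [Fintype c] {lam : ℝ} (hlam : 0 < lam) (Φ : Matrix s d ℝ)
    (Y : Matrix s c ℝ) (W : Matrix d c ℝ) :
    ridgeObj lam Φ Y (ridgeSolution lam Φ Y) ≤ ridgeObj lam Φ Y W := by
  rcases eq_or_ne W (ridgeSolution lam Φ Y) with rfl | hW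
  · exact le_rfl
  · exact (ridgeObj_ridgeSolution_lt hlam Φ Y hW).le

end RidgeSolution

lemma Matrix.PosDef.inv_add_transpose_mul_self {n m : Type} [Fintype n] [Fintype m]
    [DecidableEq n] [DecidableEq m] {A : Matrix n n ℝ} (hA : A.PosDef) (B : Matrix m n ℝ) :
    (A + Bᵀ * B)⁻¹ = A⁻¹ - A⁻¹ * Bᵀ * (1 + B * A⁻¹ * Bᵀ)⁻¹ * B * A⁻¹ := by
  have hS : (1 + B * A⁻¹ * Bᵀ).PosDef := by
    refine PosDef.one.add_posSemidef ?_
    simpa only [conjTranspose_eq_transpose_of_trivial] using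
      hA.inv.posSemidef.mul_mul_conjTranspose_same B
  simpa using add_mul_mul_inv_eq_sub A Bᵀ 1 B hA.isUnit isUnit_one (by simpa using hS.isUnit)

lemma transpose_fromRows_mul_fromRows {m₁ m₂ n k : Type} [Fintype m₁] [Fintype m₂]
    (A₁ : Matrix m₁ n ℝ) (A₂ : Matrix m₂ n ℝ) (B₁ : Matrix m₁ k ℝ) (B₂ : Matrix m₂ k ℝ) :
    (fromRows A₁ A₂)ᵀ * fromRows B₁ B₂ = A₁ᵀ * B₁ + A₂ᵀ * B₂ := by
  rw [transpose_fromRows, fromCols_mul_fromRows]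

lemma ridgeSolution_fromRows_fromBlocks {s₁ s₂ d c₁ c₂ : Type} [Fintype s₁] [Fintype s₂]
    [Fintype d] [DecidableEq d] {lam : ℝ} (hlam : 0 < lam) (Φ₁ : Matrix s₁ d ℝ)
    (Φ₂ : Matrix s₂ d ℝ) (Y₁ : Matrix s₁ c₁ ℝ) (Y₂ : Matrix s₂ c₂ ℝ) :
    ridgeSolution lam (fromRows Φ₁ Φ₂) (fromBlocks Y₁ 0 0 Y₂) =
      fromCols
        (ridgeSolution lam Φ₁ Y₁ - (Φ₁ᵀ * Φ₁ + lam • 1 + Φ₂ᵀ * Φ₂)⁻¹ * Φ₂ᵀ * Φ₂ *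
          ridgeSolution lam Φ₁ Y₁)
        ((Φ₁ᵀ * Φ₁ + lam • 1 + Φ₂ᵀ * Φ₂)⁻¹ * Φ₂ᵀ * Y₂) := by
  set A := Φ₁ᵀ * Φ₁ + lam • (1 : Matrix d d ℝ) with hA
  set W₁ := ridgeSolution lam Φ₁ Y₁
  have hgram : (fromRows Φ₁ Φ₂)ᵀ * fromRows Φ₁ Φ₂ + lam • 1 = A + Φ₂ᵀ * Φ₂ := by
    rw [transpose_fromRows_mul_fromRows, hA]; abel
  have hM : (A + Φ₂ᵀ * Φ₂)⁻¹ * (A + Φ₂ᵀ * Φ₂) = 1 := by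
    rw [← hgram]
    exact nonsing_inv_mul _ (posDef_transpose_mul_self_add_smul_one hlam _).det_pos.ne'.isUnit
  have hmoment : (fromRows Φ₁ Φ₂)ᵀ * fromBlocks Y₁ 0 0 Y₂ = fromCols (Φ₁ᵀ * Y₁) (Φ₂ᵀ * Y₂) := by
    rw [transpose_fromRows, fromCols_mul_fromBlocks]
    simp
  rw [ridgeSolution, hgram, Matrix.mul_assoc, hmoment, mul_fromCols,
    ← mul_ridgeSolution hlam Φ₁ Y₁]
  congr 1
  · calc (A + Φ₂ᵀ * Φ₂)⁻¹ * (A * W₁)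
        = (A + Φ₂ᵀ * Φ₂)⁻¹ * (A + Φ₂ᵀ * Φ₂) * W₁ - (A + Φ₂ᵀ * Φ₂)⁻¹ * Φ₂ᵀ * Φ₂ * W₁ := by
          simp only [Matrix.mul_add, Matrix.add_mul, Matrix.mul_assoc]; abel
      _ = W₁ - (A + Φ₂ᵀ * Φ₂)⁻¹ * Φ₂ᵀ * Φ₂ * W₁ := by rw [hM, Matrix.one_mul]
  · simp only [Matrix.mul_assoc]

/-- Single-step version of Theorem 1: with `M₁ = (Φ₁ᵀΦ₁ + λI)⁻¹`, `W₁ = M₁Φ₁ᵀY₁` and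
`M = M₁ − M₁Φ₂ᵀ(I + Φ₂M₁Φ₂ᵀ)⁻¹Φ₂M₁`, the recursively updated parameter
`W = [W₁ − MΦ₂ᵀΦ₂W₁ | MΦ₂ᵀY₂]` is the unique minimizer of the joint ridge objective
on the stacked data `Φ = [Φ₁; Φ₂]`, `Y = blockdiag(Y₁, Y₂)`. -/
theorem recursive_ridge_update_is_unique_joint_minimizer
    (lam : ℝ) (hlam : 0 < lam) (s₁ s₂ d c₁ c₂ : ℕ)
    (Φ₁ : Matrix (Fin s₁) (Fin d) ℝ) (Y₁ : Matrix (Fin s₁) (Fin c₁) ℝ)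
    (Φ₂ : Matrix (Fin s₂) (Fin d) ℝ) (Y₂ : Matrix (Fin s₂) (Fin c₂) ℝ)
    (M₁ : Matrix (Fin d) (Fin d) ℝ)
    (hM₁ : M₁ = (Φ₁ᵀ * Φ₁ + lam • (1 : Matrix (Fin d) (Fin d) ℝ))⁻¹)
    (W₁ : Matrix (Fin d) (Fin c₁) ℝ)
    (hW₁ : W₁ = M₁ * Φ₁ᵀ * Y₁)
    (M : Matrix (Fin d) (Fin d) ℝ)
    (hM : M = M₁ - M₁ * Φ₂ᵀ *
      ((1 : Matrix (Fin s₂) (Fin s₂) ℝ) + Φ₂ * M₁ * Φ₂ᵀ)⁻¹ * Φ₂ * M₁)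
    (W : Matrix (Fin d) (Fin c₁ ⊕ Fin c₂) ℝ)
    (hW : W = Matrix.fromCols (W₁ - M * Φ₂ᵀ * Φ₂ * W₁) (M * Φ₂ᵀ * Y₂)) :
    (∀ W' : Matrix (Fin d) (Fin c₁ ⊕ Fin c₂) ℝ,
      ridgeObj lam (Matrix.fromRows Φ₁ Φ₂) (Matrix.fromBlocks Y₁ 0 0 Y₂) W ≤
        ridgeObj lam (Matrix.fromRows Φ₁ Φ₂) (Matrix.fromBlocks Y₁ 0 0 Y₂) W') ∧
    (∀ W' : Matrix (Fin d) (Fin c₁ ⊕ Fin c₂) ℝ, W' ≠ W →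
      ridgeObj lam (Matrix.fromRows Φ₁ Φ₂) (Matrix.fromBlocks Y₁ 0 0 Y₂) W <
        ridgeObj lam (Matrix.fromRows Φ₁ Φ₂) (Matrix.fromBlocks Y₁ 0 0 Y₂) W') := by
  have hWoodbury : M = (Φ₁ᵀ * Φ₁ + lam • 1 + Φ₂ᵀ * Φ₂)⁻¹ := by
    rw [hM, hM₁, (posDef_transpose_mul_self_add_smul_one hlam Φ₁).inv_add_transpose_mul_self]
  have hW_batch : W = ridgeSolution lam (fromRows Φ₁ Φ₂) (fromBlocks Y₁ 0 0 Y₂) := by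
    rw [ridgeSolution_fromRows_fromBlocks hlam, hW, hWoodbury, hW₁, hM₁, ridgeSolution]
  subst hW_batch
  exact ⟨ridgeObj_ridgeSolution_le hlam _ _, fun _ => ridgeObj_ridgeSolution_lt hlam _ _⟩
end

section
/- (Theorem 1, full recursion.) Let λ > 0 and let (Φ_k)_{k=1}^{n} and (Y_k)_{k=1}^{n} be sequences of real matrices with Φ_k of size s_k × d and Y_k of size s_k × c_k. Define recursively: M_1 = (Φ₁ᵀΦ₁ + λ·I_d)⁻¹, W_1 = M_1Φ₁ᵀY₁, and for 2 ≤ k ≤ n, M_k = M_{k−1} − M_{k−1}Φ_kᵀ(I_{s_k} + Φ_k M_{k−1} Φ_kᵀ)⁻¹Φ_k M_{k−1} and W_k = [W_{k−1} − M_kΦ_kᵀΦ_k W_{k−1} | M_kΦ_kᵀY_k] (horizontal concatenation). Then for every k with 1 ≤ k ≤ n: (i) M_k = (Σ_{j=1}^{k} Φ_jᵀΦ_j + λ·I_d)⁻¹, and (ii) W_k is the unique minimizer over W ∈ ℝ^{d×(c₁+⋯+c_k)} of the joint ridge objective ‖Y^{(1:k)} − Φ^{(1:k)}W‖_F² + λ‖W‖_F²,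 where Φ^{(1:k)} is the vertical stack of Φ₁, …, Φ_k and Y^{(1:k)} is the block-diagonal matrix with diagonal blocks Y₁, …, Y_k. -/
set_option maxHeartbeats 1000000


open Matrix

/-- Vertical stack of the feature matrices `Φ_0, …, Φ_k`. -/
def vstack {d : ℕ} {s : ℕ → ℕ} (Φ : (k : ℕ) → Matrix (Fin (s k)) (Fin d) ℝ) (k : ℕ) :
    Matrix ((j : Fin (k + 1)) × Fin (s j.val)) (Fin d) ℝ :=
  fun p i => Φ p.1.val p.2 i

/-- Block-diagonal matrix with diagonal blocks `Y_0, …, Y_k`. -/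
def bdiag {s c : ℕ → ℕ} (Y : (k : ℕ) → Matrix (Fin (s k)) (Fin (c k)) ℝ) (k : ℕ) :
    Matrix ((j : Fin (k + 1)) × Fin (s j.val)) ((j : Fin (k + 1)) × Fin (c j.val)) ℝ :=
  Matrix.blockDiagonal' (fun j : Fin (k + 1) => Y j.val)

namespace RidgeAux

set_option linter.unusedSectionVars false

variable {m n p : Type} [Fintype m] [Fintype n] [Fintype p]

noncomputable def frob (A : Matrix m n ℝ) : ℝ := ∑ i, ∑ j, A i j ^ 2
noncomputable def finner (A B : Matrix m n ℝ) : ℝ := ∑ i, ∑ j, A i j * B i j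

lemma frob_add (A B : Matrix m n ℝ) :
    frob (A + B) = frob A + 2 * finner A B + frob B := by
  have h : ∀ i j, (A i j + B i j) ^ 2
      = A i j ^ 2 + 2 * (A i j * B i j) + B i j ^ 2 := fun i j => by ring
  simp only [frob, finner, Matrix.add_apply]
  simp_rw [h, Finset.sum_add_distrib, Finset.mul_sum]

lemma finner_neg_right (A B : Matrix m n ℝ) : finner A (-B) = - finner A B := by
  simp [finner, Finset.sum_neg_distrib]

lemma frob_neg (A : Matrix m n ℝ) : frob (-A) = frob A := by
  simp [frob]

lemma finner_smul_left (r : ℝ) (A B : Matrix m n ℝ) :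
    finner (r • A) B = r * finner A B := by
  simp only [finner, Matrix.smul_apply, smul_eq_mul, Finset.mul_sum, mul_assoc]

lemma finner_eq_trace (A B : Matrix m n ℝ) : finner A B = Matrix.trace (Aᵀ * B) := by
  unfold finner
  rw [Matrix.trace]
  simp only [Matrix.diag_apply, Matrix.mul_apply, Matrix.transpose_apply]
  exact Finset.sum_comm

lemma finner_mul_left (X : Matrix m p ℝ) (Φ : Matrix m n ℝ) (D : Matrix n p ℝ) :
    finner X (Φ * D) = finner (Φᵀ * X) D := by
  rw [finner_eq_trace, finner_eq_trace, Matrix.transpose_mul, Matrix.transpose_transpose,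
    Matrix.mul_assoc]

lemma frob_nonneg (A : Matrix m n ℝ) : 0 ≤ frob A :=
  Finset.sum_nonneg fun _ _ => Finset.sum_nonneg fun _ _ => sq_nonneg _

lemma frob_pos {A : Matrix m n ℝ} (h : A ≠ 0) : 0 < frob A := by
  have hex : ∃ i j, A i j ≠ 0 := by
    by_contra hc; push_neg at hc
    exact h (by ext i j; simpa using hc i j)
  obtain ⟨i, j, hij⟩ := hex
  have h0 : 0 < A i j ^ 2 := lt_of_le_of_ne (sq_nonneg _) (Ne.symm (pow_ne_zero 2 hij))
  have h1 : A i j ^ 2 ≤ ∑ j', A i j' ^ 2 :=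
    Finset.single_le_sum (f := fun j' => A i j' ^ 2) (fun _ _ => sq_nonneg _)
      (Finset.mem_univ j)
  have h2 : ∑ j', A i j' ^ 2 ≤ frob A :=
    Finset.single_le_sum (f := fun i => ∑ j', A i j' ^ 2)
      (fun _ _ => Finset.sum_nonneg fun _ _ => sq_nonneg _) (Finset.mem_univ i)
  linarith

lemma ridge_expand (lam : ℝ) (Φ : Matrix m n ℝ) (Y : Matrix m p ℝ)
    (Wm W' : Matrix n p ℝ) (h : Φᵀ * Φ * Wm + lam • Wm = Φᵀ * Y) :
    ridgeObj lam Φ Y W' = ridgeObj lam Φ Y Wm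
      + (frob (Φ * (W' - Wm)) + lam * frob (W' - Wm)) := by
  set D := W' - Wm with hD
  have hW' : W' = Wm + D := by rw [hD]; abel
  have hcross : finner (Y - Φ * Wm) (Φ * D) = lam * finner Wm D := by
    rw [finner_mul_left]
    have : Φᵀ * (Y - Φ * Wm) = lam • Wm := by
      rw [Matrix.mul_sub, ← Matrix.mul_assoc, ← h]; abel
    rw [this, finner_smul_left]
  have e1 : Y - Φ * W' = (Y - Φ * Wm) + (-(Φ * D)) := by
    rw [hW', Matrix.mul_add]; abel
  have e2 : ridgeObj lam Φ Y W' =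
      frob (Y - Φ * W') + lam * frob W' := rfl
  have e3 : ridgeObj lam Φ Y Wm =
      frob (Y - Φ * Wm) + lam * frob Wm := rfl
  rw [e2, e3, e1, frob_add, hW', frob_add, finner_neg_right, frob_neg, hcross]
  ring

lemma ridge_min {lam : ℝ} (hlam : 0 < lam) (Φ : Matrix m n ℝ) (Y : Matrix m p ℝ)
    (Wm : Matrix n p ℝ) (h : Φᵀ * Φ * Wm + lam • Wm = Φᵀ * Y) :
    (∀ W', ridgeObj lam Φ Y Wm ≤ ridgeObj lam Φ Y W') ∧
      (∀ W', W' ≠ Wm → ridgeObj lam Φ Y Wm < ridgeObj lam Φ Y W') := by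
  constructor
  · intro W'
    rw [ridge_expand lam Φ Y Wm W' h]
    nlinarith [frob_nonneg (Φ * (W' - Wm)), frob_nonneg (W' - Wm)]
  · intro W' hne
    rw [ridge_expand lam Φ Y Wm W' h]
    have hD : W' - Wm ≠ 0 := sub_ne_zero_of_ne hne
    nlinarith [frob_nonneg (Φ * (W' - Wm)), frob_pos hD]

variable [DecidableEq m] [DecidableEq n]

lemma real_conjTranspose_eq_transpose (Φ : Matrix m n ℝ) : Φᴴ = Φᵀ := by
  ext i j; simp [Matrix.conjTranspose_apply]

lemma posSemidef_transpose_mul_self (Φ : Matrix m n ℝ) : (Φᵀ * Φ).PosSemidef := by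
  rw [← real_conjTranspose_eq_transpose]
  exact Matrix.posSemidef_conjTranspose_mul_self Φ

lemma posSemidef_mul_mul_transpose {A : Matrix n n ℝ} (hA : A.PosSemidef)
    (Φ : Matrix m n ℝ) : (Φ * A * Φᵀ).PosSemidef := by
  rw [← real_conjTranspose_eq_transpose]
  exact hA.mul_mul_conjTranspose_same Φ

lemma posSemidef_sum {ι : Type*} (t : Finset ι) (f : ι → Matrix n n ℝ)
    (h : ∀ i ∈ t, (f i).PosSemidef) : (∑ i ∈ t, f i).PosSemidef := by
  induction t using Finset.cons_induction with
  | empty => simpa using Matrix.PosSemidef.zero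
  | cons a t ha ih =>
    rw [Finset.sum_cons]
    exact (h a (Finset.mem_cons_self a t)).add
      (ih fun i hi => h i (Finset.mem_cons_of_mem hi))

lemma woodbury {A : Matrix n n ℝ} (hA : A.PosDef) (Φ : Matrix m n ℝ) :
    (A + Φᵀ * Φ)⁻¹ =
      A⁻¹ - A⁻¹ * Φᵀ * ((1 : Matrix m m ℝ) + Φ * A⁻¹ * Φᵀ)⁻¹ * Φ * A⁻¹ := by
  set Ai := A⁻¹ with hAi
  have hBpd : ((1 : Matrix m m ℝ) + Φ * Ai * Φᵀ).PosDef :=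
    Matrix.PosDef.add_posSemidef Matrix.PosDef.one
      (posSemidef_mul_mul_transpose hA.inv.posSemidef Φ)
  set Bi := ((1 : Matrix m m ℝ) + Φ * Ai * Φᵀ)⁻¹ with hBi
  have e1 : A * Ai = 1 :=
    Matrix.mul_nonsing_inv A (Matrix.isUnit_iff_isUnit_det A |>.1 hA.isUnit)
  have e2 : ((1 : Matrix m m ℝ) + Φ * Ai * Φᵀ) * Bi = 1 :=
    Matrix.mul_nonsing_inv _ (Matrix.isUnit_iff_isUnit_det _ |>.1 hBpd.isUnit)
  have e3 : Bi * Φ + Φ * (Ai * (Φᵀ * (Bi * Φ))) = Φ := by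
    have h := congrArg (fun X => X * Φ) e2
    simp only [Matrix.add_mul, Matrix.one_mul, Matrix.mul_assoc] at h
    simpa [Matrix.mul_assoc] using h
  set E := Φᵀ * Bi * Φ with hE
  set G := Φᵀ * Φ with hG
  have key : E + G * Ai * E = G := by
    have h := congrArg (fun X => Φᵀ * X) e3
    simp only [Matrix.mul_add] at h
    simp only [hE, hG, Matrix.mul_assoc]
    simpa [Matrix.mul_assoc] using h
  have key' : G * Ai * E = G - E := eq_sub_of_add_eq' key
  refine Matrix.inv_eq_right_inv ?_
  have expand : (A + G) * (Ai - Ai * E * Ai)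
      = A * Ai - (A * Ai) * (E * Ai) + (G * Ai - (G * Ai * E) * Ai) := by
    noncomm_ring
  have goal_eq : Ai - Ai * Φᵀ * Bi * Φ * Ai = Ai - Ai * E * Ai := by
    simp only [hE, Matrix.mul_assoc]
  rw [goal_eq, expand, e1, key']
  noncomm_ring

lemma vstack_gram {d : ℕ} {s : ℕ → ℕ} (Φ : (k : ℕ) → Matrix (Fin (s k)) (Fin d) ℝ)
    (k : ℕ) :
    (vstack Φ k)ᵀ * vstack Φ k = ∑ j : Fin (k + 1), (Φ j.val)ᵀ * Φ j.val := by
  ext i i'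
  rw [Matrix.mul_apply, ← Finset.univ_sigma_univ, Finset.sum_sigma]
  simp [vstack, Matrix.sum_apply, Matrix.mul_apply, Matrix.transpose_apply]

lemma vstackT_bdiag {d : ℕ} {s c : ℕ → ℕ}
    (Φ : (k : ℕ) → Matrix (Fin (s k)) (Fin d) ℝ)
    (Y : (k : ℕ) → Matrix (Fin (s k)) (Fin (c k)) ℝ)
    (k : ℕ) (i : Fin d) (j : Fin (k + 1)) (jc : Fin (c j.val)) :
    ((vstack Φ k)ᵀ * bdiag Y k) i ⟨j, jc⟩ = ((Φ j.val)ᵀ * Y j.val) i jc := by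
  rw [Matrix.mul_apply, ← Finset.univ_sigma_univ, Finset.sum_sigma]
  rw [Finset.sum_eq_single_of_mem j (Finset.mem_univ j)]
  · rw [Matrix.mul_apply]
    refine Finset.sum_congr rfl fun r _ => ?_
    simp [vstack, bdiag, Matrix.transpose_apply]
  · intro j' _ hne
    refine Finset.sum_eq_zero fun r _ => ?_
    have : bdiag Y k ⟨j', r⟩ ⟨j, jc⟩ = 0 :=
      Matrix.blockDiagonal'_apply_ne _ _ _ hne
    rw [this, mul_zero]

end RidgeAux

/-- Theorem 1 (full recursion): the recursively updated memory matrices `M_k` equal the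
joint inverses `(Σ_{j≤k} Φ_jᵀΦ_j + λI)⁻¹`, and each recursively updated parameter `W_k`
is the unique minimizer of the joint ridge objective on all domains seen so far. -/
theorem recursive_ridge_full_recursion
    (lam : ℝ) (hlam : 0 < lam) (d : ℕ) (s c : ℕ → ℕ)
    (Φ : (k : ℕ) → Matrix (Fin (s k)) (Fin d) ℝ)
    (Y : (k : ℕ) → Matrix (Fin (s k)) (Fin (c k)) ℝ)
    (M : ℕ → Matrix (Fin d) (Fin d) ℝ)
    (W : (k : ℕ) → Matrix (Fin d) ((j : Fin (k + 1)) × Fin (c j.val)) ℝ)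
    (hM0 : M 0 = ((Φ 0)ᵀ * Φ 0 + lam • (1 : Matrix (Fin d) (Fin d) ℝ))⁻¹)
    (hW0 : ∀ (i : Fin d) (q : (j : Fin 1) × Fin (c j.val)),
      W 0 i q = (M 0 * (Φ 0)ᵀ * Y 0) i (Fin.cast (congrArg c (Fin.val_eq_zero q.1)) q.2))
    (hMrec : ∀ k : ℕ, M (k + 1) =
      M k - M k * (Φ (k + 1))ᵀ *
        ((1 : Matrix (Fin (s (k + 1))) (Fin (s (k + 1))) ℝ) +
          Φ (k + 1) * M k * (Φ (k + 1))ᵀ)⁻¹ * Φ (k + 1) * M k)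
    (hWold : ∀ (k : ℕ) (j : Fin (k + 1)) (jc : Fin (c j.val)) (i : Fin d),
      W (k + 1) i ⟨j.castSucc, jc⟩ =
        (W k - M (k + 1) * (Φ (k + 1))ᵀ * Φ (k + 1) * W k) i ⟨j, jc⟩)
    (hWnew : ∀ (k : ℕ) (jc : Fin (c (k + 1))) (i : Fin d),
      W (k + 1) i ⟨Fin.last (k + 1), jc⟩ = (M (k + 1) * (Φ (k + 1))ᵀ * Y (k + 1)) i jc) :
    ∀ k : ℕ,
      (IsUnit ((∑ j : Fin (k + 1), (Φ j.val)ᵀ * Φ j.val) +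
          lam • (1 : Matrix (Fin d) (Fin d) ℝ)) ∧
        M k = ((∑ j : Fin (k + 1), (Φ j.val)ᵀ * Φ j.val) +
          lam • (1 : Matrix (Fin d) (Fin d) ℝ))⁻¹) ∧
      ((∀ W' : Matrix (Fin d) ((j : Fin (k + 1)) × Fin (c j.val)) ℝ,
          ridgeObj lam (vstack Φ k) (bdiag Y k) (W k) ≤
            ridgeObj lam (vstack Φ k) (bdiag Y k) W') ∧
        (∀ W' : Matrix (Fin d) ((j : Fin (k + 1)) × Fin (c j.val)) ℝ, W' ≠ W k →
          ridgeObj lam (vstack Φ k) (bdiag Y k) (W k) <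
            ridgeObj lam (vstack Φ k) (bdiag Y k) W')) := by
  set A : ℕ → Matrix (Fin d) (Fin d) ℝ := fun k =>
    (∑ j : Fin (k + 1), (Φ j.val)ᵀ * Φ j.val) + lam • (1 : Matrix (Fin d) (Fin d) ℝ)
    with hA
  have hApd : ∀ k, (A k).PosDef := by
    intro k
    simp only [hA]
    refine Matrix.PosDef.posSemidef_add ?_ ?_
    · exact RidgeAux.posSemidef_sum _ _
        (fun j _ => RidgeAux.posSemidef_transpose_mul_self _)
    · rw [Matrix.smul_one_eq_diagonal]
      exact Matrix.PosDef.diagonal fun _ => hlam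
  have hdet : ∀ k, IsUnit (A k).det :=
    fun k => (Matrix.isUnit_iff_isUnit_det _).1 (hApd k).isUnit
  have hArec : ∀ k, A (k + 1) = A k + (Φ (k + 1))ᵀ * Φ (k + 1) := by
    intro k
    simp only [hA]
    rw [Fin.sum_univ_castSucc]
    simp only [Fin.coe_castSucc, Fin.val_last]
    abel
  have hA0eq : A 0 = (Φ 0)ᵀ * Φ 0 + lam • (1 : Matrix (Fin d) (Fin d) ℝ) := by
    simp [hA, Fin.sum_univ_one]
  have main : ∀ k : ℕ, M k = (A k)⁻¹ ∧
      ∀ (i : Fin d) (q : (j : Fin (k + 1)) × Fin (c j.val)),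
        (A k * W k) i q = ((Φ q.1.val)ᵀ * Y q.1.val) i q.2 := by
    intro k
    induction k with
    | zero =>
      have hM0' : M 0 = (A 0)⁻¹ := by rw [hM0, hA0eq]
      refine ⟨hM0', ?_⟩
      intro i q
      obtain ⟨⟨jv, hjv⟩, jc⟩ := q
      have hjv0 : jv = 0 := by omega
      subst hjv0
      have step : (A 0 * W 0) i ⟨⟨0, hjv⟩, jc⟩
          = (A 0 * (M 0 * (Φ 0)ᵀ * Y 0)) i jc := by
        rw [Matrix.mul_apply, Matrix.mul_apply]
        refine Finset.sum_congr rfl fun l _ => ?_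
        rw [hW0 l ⟨⟨0, hjv⟩, jc⟩]
        rfl
      rw [step, hM0', Matrix.mul_assoc ((A 0)⁻¹),
        Matrix.mul_nonsing_inv_cancel_left _ _ (hdet 0)]
    | succ k ih =>
      obtain ⟨ihM, ihNE⟩ := ih
      have hM1 : M (k + 1) = (A (k + 1))⁻¹ := by
        rw [hMrec k, ihM, hArec k]
        exact (RidgeAux.woodbury (hApd k) (Φ (k + 1))).symm
      refine ⟨hM1, ?_⟩
      intro i q
      obtain ⟨j, jc⟩ := q
      revert jc
      induction j using Fin.lastCases with
      | last =>
        intro jc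
        have step : (A (k + 1) * W (k + 1)) i ⟨Fin.last (k + 1), jc⟩
            = (A (k + 1) * (M (k + 1) * (Φ (k + 1))ᵀ * Y (k + 1))) i jc := by
          rw [Matrix.mul_apply, Matrix.mul_apply]
          refine Finset.sum_congr rfl fun l _ => ?_
          rw [hWnew k jc l]
        have hid2 : A (k + 1) * (M (k + 1) * (Φ (k + 1))ᵀ * Y (k + 1))
            = (Φ (k + 1))ᵀ * Y (k + 1) := by
          rw [hM1]
          simp only [Matrix.mul_assoc]
          exact Matrix.mul_nonsing_inv_cancel_left _ _ (hdet (k + 1))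
        rw [step, hid2]
        rfl
      | cast j =>
        intro jc
        have step : (A (k + 1) * W (k + 1)) i ⟨j.castSucc, jc⟩
            = (A (k + 1) * (W k - M (k + 1) * (Φ (k + 1))ᵀ * Φ (k + 1) * W k)) i ⟨j, jc⟩ := by
          rw [Matrix.mul_apply, Matrix.mul_apply]
          refine Finset.sum_congr rfl fun l _ => ?_
          rw [hWold k j jc l]
        have hid : A (k + 1) * (W k - M (k + 1) * (Φ (k + 1))ᵀ * Φ (k + 1) * W k)
            = A k * W k := by
          rw [hM1, Matrix.mul_sub]
          have h1 : A (k + 1) * ((A (k + 1))⁻¹ * (Φ (k + 1))ᵀ * Φ (k + 1) * W k)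
              = (Φ (k + 1))ᵀ * Φ (k + 1) * W k := by
            simp only [Matrix.mul_assoc]
            exact Matrix.mul_nonsing_inv_cancel_left _ _ (hdet (k + 1))
          rw [h1, hArec k, Matrix.add_mul]
          abel
        rw [step, hid]
        exact ihNE i ⟨j, jc⟩
  intro k
  obtain ⟨hM, hNE⟩ := main k
  have hnormal : (vstack Φ k)ᵀ * vstack Φ k * W k + lam • W k
      = (vstack Φ k)ᵀ * bdiag Y k := by
    rw [RidgeAux.vstack_gram]
    have hAW : (∑ j : Fin (k + 1), (Φ j.val)ᵀ * Φ j.val) * W k + lam • W k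
        = A k * W k := by
      rw [hA]
      rw [Matrix.add_mul, Matrix.smul_mul, Matrix.one_mul]
    rw [hAW]
    ext i q
    obtain ⟨j, jc⟩ := q
    rw [RidgeAux.vstackT_bdiag]
    exact hNE i ⟨j, jc⟩
  obtain ⟨hle, hlt⟩ := RidgeAux.ridge_min hlam (vstack Φ k) (bdiag Y k) (W k) hnormal
  exact ⟨⟨(hApd k).isUnit, hM⟩, hle, hlt⟩
end
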